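/- arXiv:1304.1461 — 3 statements merged into one kernel-verified Lean document; each statement's English description precedes it below -/
import Mathlib

section
/- Let B = ⊕_{n≥0} B_n be a positively graded finite-dimensional algebra over a field k which is quasi-hereditary, and suppose B admits a heredity chain 0 = J_0 ⊆ J_1 ⊆ ⋯ ⊆ J_n = B in which each ideal has the form J_i = B·e_i·B for an idempotent e_i ∈ B_0. Then the subspaces J_{i,0} := B_0·e_i·B_0 form a heredity chain 0 = J_{0,0} ⊆ J_{1,0} ⊆ ⋯ ⊆ J_{n,0} = B_0 of the subalgebra B_0; in particular, B_0 is a quasi-hereditary algebra. -/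
noncomputable section

variable (k : Type) [Field k]

/-- A positive (ℕ-)grading on a `k`-algebra: `1 ∈ A₀` and `Aᵢ·Aⱼ ⊆ A_{i+j}`. -/
structure PosGrading (A : Type) [Ring A] [Algebra k A] : Type where
  piece : ℕ → Submodule k A
  isInternal : DirectSum.IsInternal piece
  one_mem : (1 : A) ∈ piece 0
  mul_mem : ∀ {i j : ℕ} {x y : A}, x ∈ piece i → y ∈ piece j → x * y ∈ piece (i + j)


end

noncomputable section

section QuotRing

variable (k : Type) [Field k] (A : Type) [Ring A] [Algebra k A]

/-- The quotient ring `A/I` of a ring by a two-sided ideal. -/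
abbrev QuotRing (I : TwoSidedIdeal A) : Type := I.ringCon.Quotient

/-- The quotient ring homomorphism `A → A/I`. -/
abbrev quotMap (I : TwoSidedIdeal A) : A →+* QuotRing A I := I.ringCon.mk'

instance (I : TwoSidedIdeal A) : Module A (QuotRing A I) :=
  Function.Surjective.module A (quotMap A I).toAddMonoidHom
    (fun x => Quotient.inductionOn' x fun a => ⟨a, rfl⟩) (fun _ _ => rfl)

instance (I : TwoSidedIdeal A) : Module k (QuotRing A I) :=
  Function.Surjective.module k (quotMap A I).toAddMonoidHom
    (fun x => Quotient.inductionOn' x fun a => ⟨a, rfl⟩) (fun _ _ => rfl)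

instance (I : TwoSidedIdeal A) : IsScalarTower k A (QuotRing A I) :=
  ⟨fun c a x => Quotient.inductionOn' x fun r => congrArg Quotient.mk'' (smul_assoc c a r)⟩

end QuotRing

section Heredity

variable (R : Type) [Ring R]

/-- A heredity ideal of a ring: an idempotent two-sided ideal `J` with `J·rad(R)·J = 0`
which is projective as a left module. -/
def IsHeredityIdeal (J : TwoSidedIdeal R) : Prop :=
  (∀ x ∈ J, x ∈ Submodule.span R {z : R | ∃ a ∈ J, ∃ b ∈ J, z = a * b}) ∧
  (∀ x ∈ J, ∀ r ∈ Ideal.jacobson (⊥ : Ideal R), ∀ y ∈ J, x * r * y = 0) ∧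
  Module.Projective R ↥(TwoSidedIdeal.asIdeal J)

/-- A heredity chain `0 = J 0 ⊆ J 1 ⊆ ⋯ ⊆ J n = R`. -/
def IsHeredityChain {n : ℕ} (J : Fin (n + 1) → TwoSidedIdeal R) : Prop :=
  J 0 = ⊥ ∧ J (Fin.last n) = ⊤ ∧ Monotone J ∧
  ∀ i : Fin n, IsHeredityIdeal (QuotRing R (J i.castSucc))
    (TwoSidedIdeal.span ((quotMap R (J i.castSucc)) '' (J i.succ : Set R)))

/-- A ring is quasi-hereditary if it admits a heredity chain. -/
def IsQuasiHereditary : Prop :=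
  ∃ (n : ℕ) (J : Fin (n + 1) → TwoSidedIdeal R), IsHeredityChain R J

end Heredity
section DegZero

variable (k : Type) [Field k] {B : Type} [Ring B] [Algebra k B]

/-- The degree-zero subalgebra `B₀` of a positively graded algebra. -/
def degZero (gb : PosGrading k B) : Subalgebra k B :=
  (gb.piece 0).toSubalgebra gb.one_mem fun _ _ hx hy => gb.mul_mem hx hy

end DegZero

/-!
The degree-zero projection `ρ : B → B₀` is a ring retraction of the inclusion `ι : B₀ → B`
whose kernel `B₊` is nilpotent, `B` being finite-dimensional. Such a nil retraction `S ⇄ R`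
descends to the quotients `B₀ / J_{i-1,0} ⇄ B / J_{i-1}`, and along it heredity of `R·ι(f)·R`
passes down to `S·f·S` for an idempotent `f ∈ S`: idempotence of `S·f·S` is automatic; the nil
ideal `ker ρ` lies in `rad R`, so `ρ⁻¹(rad S) = rad R`, hence `ι (rad S) ⊆ rad R` and
`ι f · rad R · ι f = 0` pulls back to `f · rad S · f = 0`; and `S·f·S` is a retract of the base
change of `R·ι(f)·R` along `ρ`, hence projective.
-/

theorem Module.Projective.of_semilinear_retract {R S : Type*} [Ring R] [Ring S]
    {ι : S →+* R} {τ : R →+* S} (hτι : ∀ s, τ (ι s) = s)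
    {M N : Type*} [AddCommGroup M] [Module R M] [AddCommGroup N] [Module S N]
    [Module.Projective R M] (i : N →ₛₗ[ι] M) (p : M →ₛₗ[τ] N)
    (hpi : ∀ x, p (i x) = x) :
    Module.Projective S N := by
  obtain ⟨s, hs⟩ := Module.projective_def.mp ‹_›
  let push : (M →₀ R) →+ (N →₀ S) :=
    Finsupp.liftAddHom fun m => (Finsupp.singleAddHom (p m)).comp τ.toAddMonoidHom
  have push_smul (r : R) (g : M →₀ R) : push (r • g) = τ r • push g := by
    induction g using Finsupp.induction_linear with
    | zero => simp
    | add g h hg hh => simp only [smul_add, map_add, hg, hh]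
    | single m a =>
      simp only [push, Finsupp.smul_single, smul_eq_mul, Finsupp.liftAddHom_apply_single,
        AddMonoidHom.comp_apply, Finsupp.singleAddHom_apply, RingHom.toAddMonoidHom_eq_coe,
        AddMonoidHom.coe_coe, map_mul]
  have push_comb (g : M →₀ R) :
      Finsupp.linearCombination S id (push g) = p (Finsupp.linearCombination R id g) := by
    induction g using Finsupp.induction_linear with
    | zero => simp
    | add g h hg hh => simp only [map_add, hg, hh]
    | single m a => simp [push]
  refine ⟨⟨{ toFun := fun x => push (s (i x)), map_add' := ?_, map_smul' := ?_ },
    fun x => ?_⟩⟩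
  · intro x y; simp
  · intro c x; simp [push_smul, hτι]
  · simp [push_comb, hs (i x), hpi]

theorem Ideal.mem_jacobson_bot_of_forall_isNilpotent_mul {R : Type*} [Ring R] {x : R}
    (h : ∀ y, IsNilpotent (y * x)) : x ∈ Ideal.jacobson (⊥ : Ideal R) := by
  refine Ideal.mem_jacobson_iff.mpr fun y => ⟨↑(h y).isUnit_add_one.unit⁻¹, ?_⟩
  rw [Ideal.mem_bot, mul_assoc, ← mul_add_one, IsUnit.val_inv_mul, sub_self]

namespace TwoSidedIdeal

variable {R S : Type*} [Ring R] [Ring S]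

theorem map_mem_span_singleton (φ : R →+* S) {g x : R} (hx : x ∈ span {g}) :
    φ x ∈ span {φ g} :=
  (mem_comap φ).mp <| (span_le (I := comap φ (span {φ g}))).mpr
    (Set.singleton_subset_iff.mpr <| (mem_comap φ).mpr (subset_span rfl)) hx

theorem span_image_span_singleton (φ : R →+* S) (g : R) :
    span (φ '' span {g}) = span {φ g} :=
  le_antisymm (span_le.mpr <| Set.image_subset_iff.mpr fun _ hx => map_mem_span_singleton φ hx)
    (span_mono <| Set.singleton_subset_iff.mpr ⟨g, subset_span rfl, rfl⟩)

theorem mem_span_mul_of_isIdempotentElem {f : R} (hf : IsIdempotentElem f) {x : R}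
    (hx : x ∈ span {f}) :
    x ∈ Submodule.span R {z | ∃ a ∈ span {f}, ∃ b ∈ span {f}, z = a * b} := by
  suffices ∀ c, x * c ∈ Submodule.span R {z | ∃ a ∈ span {f}, ∃ b ∈ span {f}, z = a * b} by
    simpa using this 1
  induction hx using span_induction with
  | mem g hg =>
    intro b
    rw [Set.mem_singleton_iff.mp hg]
    exact Submodule.subset_span ⟨f, subset_span rfl, f * b, mul_mem_right _ _ _ (subset_span rfl),
      by rw [← mul_assoc, hf.eq]⟩
  | zero => simp
  | add x y _ _ hx hy => intro b; rw [add_mul]; exact Submodule.add_mem _ (hx b) (hy b)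
  | neg x _ hx => intro b; rw [neg_mul]; exact Submodule.neg_mem _ (hx b)
  | left_absorb a x _ hx => intro b; rw [mul_assoc]; exact Submodule.smul_mem _ a (hx b)
  | right_absorb c x _ hx => intro b; rw [mul_assoc]; exact hx (c * b)

theorem mul_mul_eq_zero_of_mem_span_singleton {N : Ideal R} [N.IsTwoSided] {f : R}
    (h : ∀ r ∈ N, f * r * f = 0) :
    ∀ x ∈ span {f}, ∀ r ∈ N, ∀ y ∈ span {f}, x * r * y = 0 := by
  have hf : ∀ y ∈ span {f}, ∀ r ∈ N, f * r * y = 0 := by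
    intro y hy
    induction hy using span_induction with
    | mem g hg => rwa [Set.mem_singleton_iff.mp hg]
    | zero => simp
    | add y z _ _ hy hz => intro r hr; rw [mul_add, hy r hr, hz r hr, add_zero]
    | neg y _ hy => intro r hr; rw [mul_neg, hy r hr, neg_zero]
    | left_absorb a y _ hy =>
      intro r hr; rw [← mul_assoc, mul_assoc f]; exact hy _ (N.mul_mem_right a hr)
    | right_absorb b y _ hy => intro r hr; rw [← mul_assoc, hy r hr, zero_mul]
  intro x hx
  induction hx using span_induction with
  | mem g hg => rw [Set.mem_singleton_iff.mp hg]; exact fun r hr y hy => hf y hy r hr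
  | zero => simp
  | add x z _ _ hx hz =>
    intro r hr y hy; rw [add_mul, add_mul, hx r hr y hy, hz r hr y hy, add_zero]
  | neg x _ hx => intro r hr y hy; rw [neg_mul, neg_mul, hx r hr y hy, neg_zero]
  | left_absorb a x _ hx =>
    intro r hr y hy; rw [mul_assoc, mul_assoc, ← mul_assoc x, hx r hr y hy, mul_zero]
  | right_absorb b x _ hx =>
    intro r hr y hy; rw [mul_assoc x]; exact hx _ (N.mul_mem_left b hr) y hy

end TwoSidedIdeal

def RingHom.restrictAsIdeal {R S : Type*} [Ring R] [Ring S] (φ : R →+* S)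
    {I : TwoSidedIdeal R} {I' : TwoSidedIdeal S} (h : ∀ x ∈ I, φ x ∈ I') :
    TwoSidedIdeal.asIdeal I →ₛₗ[φ] TwoSidedIdeal.asIdeal I' where
  toFun x := ⟨φ x.1, TwoSidedIdeal.mem_asIdeal.mpr (h _ (TwoSidedIdeal.mem_asIdeal.mp x.2))⟩
  map_add' x y := Subtype.ext (map_add φ x.1 y.1)
  map_smul' c x := Subtype.ext (map_mul φ c x.1)

section QuotRing

variable {A A' : Type} [Ring A] [Ring A']

theorem quotMap_surjective (I : TwoSidedIdeal A) : Function.Surjective (quotMap A I) :=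
  I.ringCon.mk'_surjective

theorem quotMap_eq_zero_iff {I : TwoSidedIdeal A} {a : A} : quotMap A I a = 0 ↔ a ∈ I := by
  rw [← map_zero (quotMap A I)]
  exact (RingCon.eq _).trans (by rw [I.rel_iff, sub_zero])

def QuotRing.map (f : A →+* A') {I : TwoSidedIdeal A} {I' : TwoSidedIdeal A'}
    (h : ∀ x ∈ I, f x ∈ I') : QuotRing A I →+* QuotRing A' I' :=
  I.ringCon.lift ((quotMap A' I').comp f) fun x y hxy =>
    (RingCon.eq _).mpr <| (I'.rel_iff _ _).mpr <| map_sub f x y ▸ h _ ((I.rel_iff x y).mp hxy)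

@[simp]
theorem QuotRing.map_quotMap (f : A →+* A') {I : TwoSidedIdeal A} {I' : TwoSidedIdeal A'}
    (h : ∀ x ∈ I, f x ∈ I') (a : A) :
    QuotRing.map f h (quotMap A I a) = quotMap A' I' (f a) :=
  rfl

end QuotRing

structure NilRetract (S R : Type*) [Ring S] [Ring R] where
  incl : S →+* R
  retr : R →+* S
  retr_incl : ∀ s, retr (incl s) = s
  isNilpotent_of_retr_eq_zero : ∀ x, retr x = 0 → IsNilpotent x

namespace NilRetract

variable {S R : Type} [Ring S] [Ring R] (P : NilRetract S R)

theorem retr_surjective : Function.Surjective P.retr := fun s => ⟨P.incl s, P.retr_incl s⟩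

theorem comap_retr_jacobson :
    (Ideal.jacobson (⊥ : Ideal S)).comap P.retr = Ideal.jacobson (⊥ : Ideal R) := by
  rw [Ideal.comap_jacobson_of_surjective P.retr_surjective]
  refine le_antisymm ?_ (Ideal.jacobson_mono bot_le)
  have ker_le : Ideal.comap P.retr ⊥ ≤ Ideal.jacobson (⊥ : Ideal R) := fun x hx =>
    Ideal.mem_jacobson_bot_of_forall_isNilpotent_mul fun y => P.isNilpotent_of_retr_eq_zero _ <| by
      rw [map_mul, Ideal.mem_bot.mp (Ideal.mem_comap.mp hx), mul_zero]
  simpa using Ideal.jacobson_mono ker_le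

theorem incl_mem_jacobson {s : S} (hs : s ∈ Ideal.jacobson (⊥ : Ideal S)) :
    P.incl s ∈ Ideal.jacobson (⊥ : Ideal R) := by
  rwa [← P.comap_retr_jacobson, Ideal.mem_comap, P.retr_incl]

theorem isHeredityIdeal_span_singleton {f : S} (hf : IsIdempotentElem f)
    (h : IsHeredityIdeal R (TwoSidedIdeal.span {P.incl f})) :
    IsHeredityIdeal S (TwoSidedIdeal.span {f}) := by
  obtain ⟨-, hrad, hproj⟩ := h
  have hincl : ∀ x ∈ TwoSidedIdeal.span {f}, P.incl x ∈ TwoSidedIdeal.span {P.incl f} :=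
    fun _ hx => TwoSidedIdeal.map_mem_span_singleton P.incl hx
  have hretr : ∀ x ∈ TwoSidedIdeal.span {P.incl f}, P.retr x ∈ TwoSidedIdeal.span {f} :=
    fun _ hx => P.retr_incl f ▸ TwoSidedIdeal.map_mem_span_singleton P.retr hx
  refine ⟨fun x hx => TwoSidedIdeal.mem_span_mul_of_isIdempotentElem hf hx,
    TwoSidedIdeal.mul_mul_eq_zero_of_mem_span_singleton fun r hr => ?_,
    Module.Projective.of_semilinear_retract P.retr_incl (P.incl.restrictAsIdeal hincl)
      (P.retr.restrictAsIdeal hretr) fun x => Subtype.ext (P.retr_incl x)⟩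
  have := congrArg P.retr <| hrad _ (TwoSidedIdeal.subset_span rfl) _ (P.incl_mem_jacobson hr) _
    (TwoSidedIdeal.subset_span rfl)
  simpa only [map_mul, P.retr_incl, map_zero] using this

def quotient (I₀ : TwoSidedIdeal S) (I : TwoSidedIdeal R) (hincl : ∀ x ∈ I₀, P.incl x ∈ I)
    (hretr : ∀ x ∈ I, P.retr x ∈ I₀) : NilRetract (QuotRing S I₀) (QuotRing R I) where
  incl := QuotRing.map P.incl hincl
  retr := QuotRing.map P.retr hretr
  retr_incl u := by
    obtain ⟨s, rfl⟩ := quotMap_surjective I₀ u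
    rw [QuotRing.map_quotMap, QuotRing.map_quotMap, P.retr_incl]
  isNilpotent_of_retr_eq_zero u hu := by
    obtain ⟨b, rfl⟩ := quotMap_surjective I u
    rw [QuotRing.map_quotMap, quotMap_eq_zero_iff] at hu
    have hb : quotMap R I b = quotMap R I (b - P.incl (P.retr b)) := by
      rw [map_sub, quotMap_eq_zero_iff.mpr (hincl _ hu), sub_zero]
    rw [hb]
    exact (P.isNilpotent_of_retr_eq_zero _ (by rw [map_sub, P.retr_incl, sub_self])).map _

theorem isHeredityChain {n : ℕ} {J : Fin (n + 1) → TwoSidedIdeal R} (hJ : IsHeredityChain R J)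
    {f : Fin n → S} (hf : ∀ i, IsIdempotentElem (f i))
    (hJf : ∀ i : Fin n, J i.succ = TwoSidedIdeal.span {P.incl (f i)}) :
    IsHeredityChain S (fun i => Fin.cases ⊥ (fun j => TwoSidedIdeal.span {f j}) i) := by
  obtain ⟨hJ0, hJtop, hJmono, hJher⟩ := hJ
  set F : Fin (n + 1) → TwoSidedIdeal S :=
    fun i => Fin.cases ⊥ (fun j => TwoSidedIdeal.span {f j}) i
  have hincl : ∀ i, ∀ x ∈ F i, P.incl x ∈ J i := by
    refine Fin.cases ?_ fun j x hx => ?_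
    · intro x hx
      rw [show x = 0 from (TwoSidedIdeal.mem_bot _).mp hx, map_zero]
      exact (J 0).zero_mem
    · rw [hJf j]
      exact TwoSidedIdeal.map_mem_span_singleton P.incl hx
  have hretr : ∀ i, ∀ x ∈ J i, P.retr x ∈ F i := by
    refine Fin.cases ?_ fun j x hx => ?_
    · intro x hx
      rw [hJ0, TwoSidedIdeal.mem_bot] at hx
      rw [hx, map_zero]
      exact (F 0).zero_mem
    · rw [hJf j] at hx
      simpa [F, P.retr_incl] using TwoSidedIdeal.map_mem_span_singleton P.retr hx
  refine ⟨rfl, ?_, fun a b hab x hx => ?_, fun i => ?_⟩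
  · exact TwoSidedIdeal.eq_top _ (by simpa using hretr _ 1 (TwoSidedIdeal.one_mem _ hJtop))
  · simpa [P.retr_incl] using hretr b _ (hJmono hab (hincl a x hx))
  · let Q := P.quotient _ _ (hincl i.castSucc) (hretr i.castSucc)
    have hQ : IsHeredityIdeal _ (TwoSidedIdeal.span {Q.incl (quotMap S _ (f i))}) := by
      have := hJher i
      rwa [hJf i, TwoSidedIdeal.span_image_span_singleton] at this
    have hFsucc : F i.succ = TwoSidedIdeal.span {f i} := Fin.cases_succ _
    rw [hFsucc, TwoSidedIdeal.span_image_span_singleton]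
    exact Q.isHeredityIdeal_span_singleton ((hf i).map (quotMap S _)) hQ

end NilRetract

namespace GradedRing

variable {k A : Type*} [Field k] [Ring A] [Algebra k A] (𝒜 : ℕ → Submodule k A)

def gradeGE (m : ℕ) : Submodule k A := ⨆ (i) (_ : m ≤ i), 𝒜 i

theorem le_gradeGE {m i : ℕ} (h : m ≤ i) : 𝒜 i ≤ gradeGE 𝒜 m :=
  le_iSup₂_of_le (f := fun i (_ : m ≤ i) => 𝒜 i) i h le_rfl

variable [GradedRing 𝒜]

theorem gradeGE_mul_le (a b : ℕ) : gradeGE 𝒜 a * gradeGE 𝒜 b ≤ gradeGE 𝒜 (a + b) := by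
  simp only [gradeGE, Submodule.iSup_mul, Submodule.mul_iSup, iSup_le_iff]
  intro j hj i hi
  exact Submodule.mul_le.mpr (fun x hx y hy => SetLike.GradedMul.mul_mem hx hy) |>.trans
    (le_gradeGE 𝒜 (add_le_add hi hj))

theorem pow_mem_gradeGE {x : A} (hx : x ∈ gradeGE 𝒜 1) (m : ℕ) :
    x ^ m ∈ gradeGE 𝒜 m := by
  induction m with
  | zero => exact le_gradeGE 𝒜 le_rfl (pow_zero x ▸ SetLike.GradedOne.one_mem)
  | succ m ih => rw [pow_succ]; exact gradeGE_mul_le 𝒜 m 1 (Submodule.mul_mem_mul ih hx)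

theorem mem_gradeGE_one_of_projZeroRingHom_eq_zero {x : A} (hx : projZeroRingHom 𝒜 x = 0) :
    x ∈ gradeGE 𝒜 1 := by
  classical
  rw [← DirectSum.sum_support_decompose 𝒜 x]
  refine Submodule.sum_mem _ fun i _ => ?_
  rcases i with _ | i
  · rw [← projZeroRingHom_apply, hx]
    exact Submodule.zero_mem _
  · exact le_gradeGE 𝒜 (Nat.succ_pos i) (SetLike.coe_mem _)

theorem exists_gradeGE_eq_bot [FiniteDimensional k A] : ∃ D, gradeGE 𝒜 (D + 1) = ⊥ := by
  have hfin : {i | 𝒜 i ≠ ⊥}.Finite := WellFoundedGT.finite_ne_bot_of_iSupIndep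
    (DirectSum.Decomposition.isInternal 𝒜).submodule_iSupIndep
  obtain ⟨D, hD⟩ := hfin.bddAbove
  refine ⟨D, iSup₂_eq_bot.mpr fun i hi => ?_⟩
  by_contra h
  exact absurd (hD h) (by omega)

theorem isNilpotent_of_projZeroRingHom_eq_zero [FiniteDimensional k A] {x : A}
    (hx : projZeroRingHom 𝒜 x = 0) : IsNilpotent x := by
  obtain ⟨D, hD⟩ := exists_gradeGE_eq_bot 𝒜
  refine ⟨D + 1, ?_⟩
  simpa [hD] using pow_mem_gradeGE 𝒜 (mem_gradeGE_one_of_projZeroRingHom_eq_zero 𝒜 hx) (D + 1)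

end GradedRing

namespace PosGrading

variable {k B : Type} [Field k] [Ring B] [Algebra k B]

abbrev toGradedRing (gb : PosGrading k B) : GradedRing gb.piece :=
  { gb.isInternal.chooseDecomposition with
    one_mem := gb.one_mem
    mul_mem := fun _ _ _ _ => gb.mul_mem }

def degZeroNilRetract [FiniteDimensional k B] (gb : PosGrading k B) :
    NilRetract (degZero k gb) B :=
  letI := gb.toGradedRing
  { incl := (degZero k gb).val
    retr := (GradedRing.projZeroRingHom gb.piece).codRestrict (degZero k gb)
      fun _ => SetLike.coe_mem _
    retr_incl := fun x => Subtype.ext (DirectSum.decompose_of_mem_same gb.piece x.2)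
    isNilpotent_of_retr_eq_zero := fun _ hx =>
      GradedRing.isNilpotent_of_projZeroRingHom_eq_zero gb.piece (congrArg Subtype.val hx) }

end PosGrading

/-- If a positively graded finite-dimensional algebra `B` has a heredity
chain with `J i = B·eᵢ·B` for idempotents `eᵢ ∈ B₀`, then the ideals `B₀·eᵢ·B₀` form a
heredity chain of `B₀`; in particular `B₀` is quasi-hereditary. -/
theorem stmt0 (k B : Type) [Field k] [Ring B] [Algebra k B] [FiniteDimensional k B]
    (gb : PosGrading k B) (n : ℕ) (J : Fin (n + 1) → TwoSidedIdeal B)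
    (hchain : IsHeredityChain B J)
    (e : Fin n → B) (hidem : ∀ i, IsIdempotentElem (e i)) (he : ∀ i, e i ∈ gb.piece 0)
    (hJ : ∀ i : Fin n, J i.succ = TwoSidedIdeal.span {e i}) :
    IsHeredityChain ↥(degZero k gb)
      (fun i : Fin (n + 1) =>
        Fin.cases ⊥ (fun j : Fin n =>
          TwoSidedIdeal.span {(⟨e j, he j⟩ : ↥(degZero k gb))}) i) ∧
    IsQuasiHereditary ↥(degZero k gb) := by
  have hB₀ := gb.degZeroNilRetract.isHeredityChain hchain (f := fun i => ⟨e i, he i⟩)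
    (fun i => Subtype.ext (hidem i)) hJ
  exact ⟨hB₀, n, _, hB₀⟩

end
end

section
/- Let a → B be a morphism of positively graded algebras with B tight over a, let M' be a graded B-module and suppose M := M'|_a is semilinear of degree m. Then for each s ∈ ℤ the graded a-submodule M^{≤s} of M is a B-submodule of M', so the quotient M^{#m} naturally inherits a graded B-module structure M'^{#m}; moreover the natural surjection M ↠ M^{#m} of graded a-modules agrees with the restriction to a of the natural surjection M' ↠ M'^{#m} of graded B-modules. -/
noncomputable section

variable (k : Type) [Field k]

variable {A B : Type} [Ring A] [Algebra k A] [Ring B] [Algebra k B]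

/-- A (ℤ-)grading on an `A`-module compatible with a positive grading of `A`. -/
structure ModGrading (ga : PosGrading k A) (M : Type) [AddCommGroup M] [Module k M]
    [Module A M] [IsScalarTower k A M] : Type where
  piece : ℤ → Submodule k M
  isInternal : DirectSum.IsInternal piece
  smul_mem : ∀ {i : ℕ} {j : ℤ} {x : A} {m : M}, x ∈ ga.piece i → m ∈ piece j →
    x • m ∈ piece (i + j)

/-- A bundled finite-dimensional graded module. -/
structure GrMod (ga : PosGrading k A) : Type 1 where
  carrier : Type
  [isAddCommGroup : AddCommGroup carrier]
  [isModulek : Module k carrier]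
  [isModuleA : Module A carrier]
  [isTower : IsScalarTower k A carrier]
  fin : FiniteDimensional k carrier
  grading : ModGrading k ga carrier

attribute [instance] GrMod.isAddCommGroup GrMod.isModulek GrMod.isModuleA GrMod.isTower GrMod.fin

section OneAlgebra

variable {ga : PosGrading k A}

/-- A grade-preserving module map. -/
def IsGradedMap {M N : Type} [AddCommGroup M] [Module k M] [Module A M] [IsScalarTower k A M]
    [AddCommGroup N] [Module k N] [Module A N] [IsScalarTower k A N]
    (gm : ModGrading k ga M) (gn : ModGrading k ga N) (f : M →ₗ[A] N) : Prop :=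
  ∀ (i : ℤ) (m : M), m ∈ gm.piece i → f m ∈ gn.piece i

/-- Projectivity in the category of graded modules. -/
def IsGrProjective (P : GrMod k ga) : Prop :=
  ∀ (M N : GrMod k ga) (g : M.carrier →ₗ[A] N.carrier), IsGradedMap k M.grading N.grading g →
    Function.Surjective g → ∀ h : P.carrier →ₗ[A] N.carrier, IsGradedMap k P.grading N.grading h →
      ∃ l : P.carrier →ₗ[A] M.carrier, IsGradedMap k P.grading M.grading l ∧ g ∘ₗ l = h

/-- `M` is generated over `A` by its grade-`s` component. -/
def GenInDeg (M : GrMod k ga) (s : ℤ) : Prop :=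
  (⊤ : Submodule A M.carrier) ≤ Submodule.span A (M.grading.piece s : Set M.carrier)

/-- `M` is generated over `A` by its components in grades `< m`. -/
def GenBelow (M : GrMod k ga) (m : ℤ) : Prop :=
  (⊤ : Submodule A M.carrier) ≤
    Submodule.span A {x : M.carrier | ∃ i : ℤ, i < m ∧ x ∈ M.grading.piece i}

/-- The submodule `S` is generated over `A` by its grade-`t` part. -/
def SubGenInDeg {M : Type} [AddCommGroup M] [Module k M] [Module A M] [IsScalarTower k A M]
    (gm : ModGrading k ga M) (S : Submodule A M) (t : ℤ) : Prop :=
  S ≤ Submodule.span A ((S : Set M) ∩ (gm.piece t : Set M))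

/-- A linear graded projective resolution of `M`, where `M` is generated in grade `m`. -/
structure LinearResolution (M : GrMod k ga) (m : ℤ) : Type 1 where
  P : ℕ → GrMod k ga
  aug : (P 0).carrier →ₗ[A] M.carrier
  d : ∀ n : ℕ, (P (n + 1)).carrier →ₗ[A] (P n).carrier
  aug_graded : IsGradedMap k (P 0).grading M.grading aug
  d_graded : ∀ n, IsGradedMap k (P (n + 1)).grading (P n).grading (d n)
  proj : ∀ n, IsGrProjective k (P n)
  aug_surj : Function.Surjective aug
  exact_zero : LinearMap.range (d 0) = LinearMap.ker aug
  exact_succ : ∀ n, LinearMap.range (d (n + 1)) = LinearMap.ker (d n)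
  ker_aug_gen : SubGenInDeg k (P 0).grading (LinearMap.ker aug) (m + 1)
  ker_d_gen : ∀ n, SubGenInDeg k (P (n + 1)).grading (LinearMap.ker (d n)) (m + (n + 1) + 1)

/-- A graded module is linear of degree `m`. -/
def IsLinearOfDegree (M : GrMod k ga) (m : ℤ) : Prop :=
  GenInDeg k M m ∧ Nonempty (LinearResolution k M m)

/-- A graded module is semilinear of degree `m`: it is a direct sum (expressed via a biproduct
diagram) of a module linear of degree `m` and a projective graded module generated in
grades `< m`. -/
def IsSemilinearOfDegree (M : GrMod k ga) (m : ℤ) : Prop :=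
  ∃ (N P : GrMod k ga) (ι₁ : N.carrier →ₗ[A] M.carrier) (ι₂ : P.carrier →ₗ[A] M.carrier)
    (π₁ : M.carrier →ₗ[A] N.carrier) (π₂ : M.carrier →ₗ[A] P.carrier),
      IsGradedMap k N.grading M.grading ι₁ ∧ IsGradedMap k P.grading M.grading ι₂ ∧
      IsGradedMap k M.grading N.grading π₁ ∧ IsGradedMap k M.grading P.grading π₂ ∧
      π₁ ∘ₗ ι₁ = LinearMap.id ∧ π₂ ∘ₗ ι₂ = LinearMap.id ∧
      π₁ ∘ₗ ι₂ = 0 ∧ π₂ ∘ₗ ι₁ = 0 ∧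
      ι₁ ∘ₗ π₁ + ι₂ ∘ₗ π₂ = LinearMap.id ∧
      IsLinearOfDegree k N m ∧ IsGrProjective k P ∧ GenBelow k P m

/-- `M^{≤ s} = Σ_{j ≤ s} A·M_j`. -/
def GrMod.hatLe (M : GrMod k ga) (s : ℤ) : Submodule A M.carrier :=
  Submodule.span A {x : M.carrier | ∃ j : ℤ, j ≤ s ∧ x ∈ M.grading.piece j}

/-- `M^s = A·M_s`. -/
def GrMod.hatAt (M : GrMod k ga) (s : ℤ) : Submodule A M.carrier :=
  Submodule.span A (M.grading.piece s : Set M.carrier)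

/-- `(Q, π)` realizes the quotient `M^{≤ s}/M^{< s} = M/M^{< s}` (for `M` generated in
grades `≤ s`) as a graded module. -/
def IsTopHash (M : GrMod k ga) (Q : GrMod k ga) (π : M.carrier →ₗ[A] Q.carrier) (s : ℤ) : Prop :=
  Function.Surjective π ∧ LinearMap.ker π = M.hatLe k (s - 1) ∧
    IsGradedMap k M.grading Q.grading π ∧
    ∀ (i : ℤ) (v : Q.carrier), v ∈ Q.grading.piece i → ∃ x ∈ M.grading.piece i, π x = v

/-- The kernel of `ρ` is contained in `rad(A)·R`. -/
def SmallKernel {R N : GrMod k ga} (ρ : R.carrier →ₗ[A] N.carrier) : Prop :=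
  ∀ x ∈ LinearMap.ker ρ,
    x ∈ Submodule.span A
      {z : R.carrier | ∃ r ∈ Ideal.jacobson (⊥ : Ideal A), ∃ v : R.carrier, z = r • v}

/-- `ρ : R ↠ N` is a projective cover in the category of graded modules. -/
def IsGrProjCover (R N : GrMod k ga) (ρ : R.carrier →ₗ[A] N.carrier) : Prop :=
  IsGradedMap k R.grading N.grading ρ ∧ Function.Surjective ρ ∧
    IsGrProjective k R ∧ SmallKernel k ρ

/-- `(K, κ)` realizes the kernel of `ρ` as a graded module. -/
def IsKernelRealization {R N : GrMod k ga} (ρ : R.carrier →ₗ[A] N.carrier)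
    (K : GrMod k ga) (κ : K.carrier →ₗ[A] R.carrier) : Prop :=
  Function.Injective κ ∧ LinearMap.range κ = LinearMap.ker ρ ∧
    IsGradedMap k K.grading R.grading κ ∧
    ∀ (i : ℤ) (x : R.carrier), x ∈ R.grading.piece i → x ∈ LinearMap.ker ρ →
      ∃ y ∈ K.grading.piece i, κ y = x

end OneAlgebra

section TwoAlgebras

/-- A grade-preserving algebra homomorphism. -/
def IsGradedAlgHom (ga : PosGrading k A) (gb : PosGrading k B) (φ : A →ₐ[k] B) : Prop :=
  ∀ (i : ℕ) (x : A), x ∈ ga.piece i → φ x ∈ gb.piece i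

/-- `B` is tight over `A` (via `φ`): `A·B₀ = B`. -/
def IsTight (gb : PosGrading k B) (φ : A →ₐ[k] B) : Prop :=
  ∀ b : B, b ∈ Submodule.span k {z : B | ∃ (x : A) (y : B), y ∈ gb.piece 0 ∧ z = φ x * y}

variable {ga : PosGrading k A} {gb : PosGrading k B}

/-- Restriction of a graded `B`-module to a graded `A`-module along a graded algebra map. -/
@[reducible] def GrMod.res (φ : A →ₐ[k] B) (hφ : IsGradedAlgHom k ga gb φ)
    (M : GrMod k gb) : GrMod k ga :=
  letI : Module A M.carrier := Module.compHom M.carrier φ.toRingHom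
  haveI : IsScalarTower k A M.carrier := ⟨fun c x m => show φ (c • x) • m = c • (φ x • m) by
    rw [map_smul, smul_assoc]⟩
  { carrier := M.carrier
    fin := M.fin
    grading :=
      { piece := M.grading.piece
        isInternal := M.grading.isInternal
        smul_mem := fun {i j x m} hx hm =>
          show φ x • m ∈ M.grading.piece (i + j) from M.grading.smul_mem (hφ i x hx) hm } }

/-- A `B`-linear map viewed as an `A`-linear map between restricted modules. -/
def resMap (φ : A →ₐ[k] B) (hφ : IsGradedAlgHom k ga gb φ) {M N : GrMod k gb}
    (h : M.carrier →ₗ[B] N.carrier) :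
    (GrMod.res k φ hφ M).carrier →ₗ[A] (GrMod.res k φ hφ N).carrier where
  toFun := h
  map_add' := h.map_add
  map_smul' := fun a m => by
    show h (φ a • m) = φ a • h m
    exact h.map_smul (φ a) m

/-- `(Q, π)` realizes, in graded `B`-modules, the quotient `M^{#s} = M/M^{< s}` of `M`,
where `M^{< s}` is taken with respect to the restricted `A`-structure. -/
def IsTopHashB (φ : A →ₐ[k] B) (hφ : IsGradedAlgHom k ga gb φ) (M Q : GrMod k gb)
    (π : M.carrier →ₗ[B] Q.carrier) (s : ℤ) : Prop :=
  Function.Surjective π ∧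
    ((LinearMap.ker π : Set M.carrier) =
      (((GrMod.res k φ hφ M).hatLe k (s - 1) : Submodule A _) : Set M.carrier)) ∧
    IsGradedMap k M.grading Q.grading π ∧
    ∀ (i : ℤ) (v : Q.carrier), v ∈ Q.grading.piece i → ∃ x ∈ M.grading.piece i, π x = v

end TwoAlgebras

end

/-!
Since `B = a·B₀` and `B₀` preserves every grade, each generator `b • v` (`v ∈ M_j`, `j ≤ s`)
of `B·M^{≤s}` already lies in `M^{≤s}`. Over `k`, `M^{≤s}` is spanned by the homogeneous
elements `x • v` with `x ∈ aᵢ`, so it is a graded subspace; the grading of `M'` therefore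
descends to `M'/M^{<m}`, whose pieces are the images of those of `M'`.
-/

open DirectSum

section HomogeneousQuotient

variable {ι R M N : Type*} [DecidableEq ι] [Ring R] [AddCommGroup M] [Module R M]
  [AddCommGroup N] [Module R N] (ℳ : ι → Submodule R M) [Decomposition ℳ]

theorem isHomogeneous_span_of_mem_pieces {T : Set M} (hT : ∀ x ∈ T, ∃ i, x ∈ ℳ i) :
    SetLike.IsHomogeneous ℳ (Submodule.span R T) := by
  intro i x hx
  induction hx using Submodule.span_induction with
  | mem x hx =>
    obtain ⟨j, hj⟩ := hT x hx
    by_cases hji : j = i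
    · subst hji
      rw [decompose_of_mem_same ℳ hj]
      exact Submodule.subset_span hx
    · rw [decompose_of_mem_ne ℳ hj hji]
      exact zero_mem _
  | zero => simp
  | add x y _ _ hx hy =>
    rw [decompose_add, DirectSum.add_apply, Submodule.coe_add]
    exact add_mem hx hy
  | smul r x _ hx =>
    rw [decompose_smul, DirectSum.smul_apply, Submodule.coe_smul]
    exact Submodule.smul_mem _ r hx

theorem decompose_eq_zero_of_mem_iSup_ne {i : ι} {x : M} (hx : x ∈ ⨆ j ≠ i, ℳ j) :
    (decompose ℳ x i : M) = 0 := by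
  let proj : M →ₗ[R] M :=
    (ℳ i).subtype ∘ₗ component R ι (fun j => ℳ j) i ∘ₗ (decomposeLinearEquiv ℳ).toLinearMap
  have hle : ⨆ j ≠ i, ℳ j ≤ LinearMap.ker proj :=
    iSup₂_le fun j hji y hy => decompose_of_mem_ne ℳ hy hji
  exact hle hx

theorem isInternal_map_of_isHomogeneous_ker (g : M →ₗ[R] N) (hg : Function.Surjective g)
    (hker : SetLike.IsHomogeneous ℳ (LinearMap.ker g)) :
    IsInternal fun i => (ℳ i).map g := by
  refine (isInternal_submodule_iff_iSupIndep_and_iSup_eq_top _).2 ⟨fun i => ?_, ?_⟩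
  · rw [Submodule.disjoint_def]
    rintro _ ⟨x, hx, rfl⟩ hgx
    simp only [← Submodule.map_iSup] at hgx
    obtain ⟨z, hz, hgz⟩ := hgx
    have hxz : x - z ∈ LinearMap.ker g := by simp [hgz]
    have := hker i hxz
    rwa [decompose_sub, DirectSum.sub_apply, Submodule.coe_sub, decompose_of_mem_same ℳ hx,
      decompose_eq_zero_of_mem_iSup_ne ℳ hz, sub_zero] at this
  · rw [← Submodule.map_iSup, (Decomposition.isInternal ℳ).submodule_iSup_eq_top,
      Submodule.map_top, LinearMap.range_eq_top.2 hg]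

end HomogeneousQuotient

theorem PosGrading.span_iUnion_piece_eq_top {k A : Type} [Field k] [Ring A] [Algebra k A]
    (ga : PosGrading k A) : Submodule.span k (⋃ i, (ga.piece i : Set A)) = ⊤ := by
  rw [← Submodule.iSup_eq_span, ga.isInternal.submodule_iSup_eq_top]

namespace GrMod

open scoped Pointwise

variable {k A B : Type} [Field k] [Ring A] [Algebra k A] [Ring B] [Algebra k B]
  {ga : PosGrading k A} {gb : PosGrading k B}

section Quotient

variable (M : GrMod k ga) [Decomposition M.grading.piece]

theorem isHomogeneous_hatLe (s : ℤ) : SetLike.IsHomogeneous M.grading.piece (M.hatLe k s) := by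
  have hhom : SetLike.IsHomogeneous M.grading.piece (Submodule.span k
      ((⋃ i, (ga.piece i : Set A)) • {v : M.carrier | ∃ j : ℤ, j ≤ s ∧ v ∈ M.grading.piece j})) :=
    isHomogeneous_span_of_mem_pieces _ <| by
      rintro _ ⟨a, ha, v, ⟨j, -, hv⟩, rfl⟩
      obtain ⟨i, ha⟩ := Set.mem_iUnion.1 ha
      exact ⟨_, M.grading.smul_mem ha hv⟩
  rwa [Submodule.span_smul_of_span_eq_top ga.span_iUnion_piece_eq_top] at hhom

def quotient (N : Submodule A M.carrier) (hN : SetLike.IsHomogeneous M.grading.piece N) :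
    GrMod k ga where
  carrier := M.carrier ⧸ N
  fin := Module.Finite.of_surjective (N.mkQ.restrictScalars k) N.mkQ_surjective
  grading :=
    { piece := fun i => (M.grading.piece i).map (N.mkQ.restrictScalars k)
      isInternal := isInternal_map_of_isHomogeneous_ker M.grading.piece _ N.mkQ_surjective
        fun i x hx => by simpa using hN i (by simpa using hx)
      smul_mem := by
        rintro i j a _ ha ⟨x, hx, rfl⟩
        exact ⟨a • x, M.grading.smul_mem ha hx, rfl⟩ }

variable (N : Submodule A M.carrier) (hN : SetLike.IsHomogeneous M.grading.piece N)

theorem isGradedMap_mkQ : IsGradedMap k M.grading (M.quotient N hN).grading N.mkQ :=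
  fun _ x hx => ⟨x, hx, rfl⟩

theorem exists_mem_piece_mkQ_eq {i : ℤ} {v : M.carrier ⧸ N}
    (hv : v ∈ (M.quotient N hN).grading.piece i) : ∃ x ∈ M.grading.piece i, N.mkQ x = v :=
  hv

end Quotient

section Tight

variable {φ : A →ₐ[k] B} (hφ : IsGradedAlgHom k ga gb φ) (M : GrMod k gb)

theorem smul_mem_hatLe_res_of_mem_piece (htight : IsTight k gb φ) {s j : ℤ} (hjs : j ≤ s)
    (b : B) {v : M.carrier} (hv : v ∈ M.grading.piece j) :
    b • v ∈ (M.res k φ hφ).hatLe k s := by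
  induction htight b using Submodule.span_induction with
  | mem _ hz =>
    obtain ⟨a, y, hy, rfl⟩ := hz
    have hyv : y • v ∈ M.grading.piece j := by simpa using M.grading.smul_mem hy hv
    rw [mul_smul]
    exact ((M.res k φ hφ).hatLe k s).smul_mem a (Submodule.subset_span ⟨j, hjs, hyv⟩)
  | zero => rw [zero_smul]; exact zero_mem _
  | add _ _ _ _ h₁ h₂ => rw [add_smul]; exact add_mem h₁ h₂
  | smul c _ _ h => rw [smul_assoc]; exact ((M.res k φ hφ).hatLe k s).smul_of_tower_mem c h

theorem smul_mem_hatLe_res (htight : IsTight k gb φ) {s : ℤ} (b : B) {x : M.carrier}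
    (hx : x ∈ (M.res k φ hφ).hatLe k s) : b • x ∈ (M.res k φ hφ).hatLe k s := by
  induction hx using Submodule.span_induction generalizing b with
  | mem _ hv =>
    obtain ⟨j, hjs, hv⟩ := hv
    exact smul_mem_hatLe_res_of_mem_piece hφ M htight hjs b hv
  | zero => rw [smul_zero]; exact zero_mem _
  | add _ _ _ _ h₁ h₂ => rw [smul_add]; exact add_mem (h₁ b) (h₂ b)
  | smul a y _ h =>
    show b • (φ a • y) ∈ _
    rw [← mul_smul]
    exact h (b * φ a)

def hatLeSubmodule (htight : IsTight k gb φ) (s : ℤ) : Submodule B M.carrier where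
  toAddSubmonoid := ((M.res k φ hφ).hatLe k s).toAddSubmonoid
  smul_mem' b _ hx := smul_mem_hatLe_res hφ M htight b hx

end Tight

end GrMod

noncomputable section

variable (k A B : Type) [Field k] [Ring A] [Algebra k A] [FiniteDimensional k A]
  [Ring B] [Algebra k B] [FiniteDimensional k B]
  (ga : PosGrading k A) (gb : PosGrading k B)

theorem stmt4 (φ : A →ₐ[k] B) (hφ : IsGradedAlgHom k ga gb φ) (htight : IsTight k gb φ)
    (M' : GrMod k gb) (m : ℤ) :
    (∀ (s : ℤ) (b : B) (x : M'.carrier),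
        x ∈ (GrMod.res k φ hφ M').hatLe k s → b • x ∈ (GrMod.res k φ hφ M').hatLe k s) ∧
    ∃ (Q' : GrMod k gb) (π' : M'.carrier →ₗ[B] Q'.carrier),
      IsTopHashB k φ hφ M' Q' π' m ∧
      IsTopHash k (GrMod.res k φ hφ M') (GrMod.res k φ hφ Q') (resMap k φ hφ π') m := by
  let := M'.grading.isInternal.chooseDecomposition
  let N := M'.hatLeSubmodule hφ htight (m - 1)
  have hN : SetLike.IsHomogeneous M'.grading.piece N :=
    (M'.res k φ hφ).isHomogeneous_hatLe (m - 1)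
  have hkerN : ∀ x, N.mkQ x = 0 ↔ x ∈ (M'.res k φ hφ).hatLe k (m - 1) :=
    fun _ => Submodule.Quotient.mk_eq_zero N
  refine ⟨fun s b x => GrMod.smul_mem_hatLe_res hφ M' htight b,
    M'.quotient N hN, N.mkQ, ⟨N.mkQ_surjective, Set.ext hkerN, M'.isGradedMap_mkQ N hN,
      fun _ _ => M'.exists_mem_piece_mkQ_eq N hN⟩,
    ⟨N.mkQ_surjective, Submodule.ext hkerN, M'.isGradedMap_mkQ N hN,
      fun _ _ => M'.exists_mem_piece_mkQ_eq N hN⟩⟩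

end
end

section
/- Let a → B be a morphism of positively graded algebras over a field k with B tight over a. Let N be a graded B-module whose restriction N|_a is semilinear of degree m, and suppose there exists a projective B-module P such that P|_a is projective as an a-module and there is a surjection P ↠ N of B-modules. Let R ↠ N be the projective cover of N in the category of graded B-modules. Then R|_a is projective in the category of graded a-modules. -/
/-!
Since `P` is projective over `B`, the surjection `σ : P ↠ N'` lifts along the projective cover
`ρ : R ↠ N'` to some `τ : P → R`; as `ker ρ` lies in the Jacobson radical of the finitely
generated module `R`, Nakayama's lemma makes `τ` surjective. A graded projective module is
projective (it is a graded direct summand of a shifted free module), so `τ` splits and `R` is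
a direct summand of `P`, hence projective over `A`. Finally an ungraded lift between graded
modules can be replaced by its degree-preserving part, so `R` is projective as a graded
`A`-module.
-/

open DirectSum

namespace DirectSum.IsInternal

variable {R ι M : Type*} [Ring R] [AddCommGroup M] [Module R M] [DecidableEq ι]
  {p : ι → Submodule R M}

theorem induction_on (h : IsInternal p) {motive : M → Prop} (x : M)
    (mem : ∀ i, ∀ y ∈ p i, motive y) (zero : motive 0)
    (add : ∀ y z, motive y → motive z → motive (y + z)) : motive x :=
  Submodule.iSup_induction' (motive := fun y _ => motive y) p mem zero
    (fun y z _ _ => add y z) (h.submodule_iSup_eq_top ▸ Submodule.mem_top)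

end DirectSum.IsInternal

noncomputable section

namespace GrMod

variable {k : Type} [Field k] {A : Type} [Ring A] [Algebra k A] {ga : PosGrading k A}

def proj (M : GrMod k ga) (i : ℤ) : M.carrier →ₗ[k] M.carrier :=
  (M.grading.piece i).subtype ∘ₗ component k ℤ (fun j => M.grading.piece j) i ∘ₗ
    (LinearEquiv.ofBijective (coeLinearMap M.grading.piece) M.grading.isInternal).symm.toLinearMap

variable (M : GrMod k ga)

lemma proj_apply (i : ℤ) (x : M.carrier) : M.proj i x =
    ((LinearEquiv.ofBijective (coeLinearMap M.grading.piece) M.grading.isInternal).symm x i :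
      M.carrier) := rfl

lemma proj_mem (i : ℤ) (x : M.carrier) : M.proj i x ∈ M.grading.piece i :=
  Subtype.prop _

lemma proj_of_mem {i j : ℤ} {x : M.carrier} (hx : x ∈ M.grading.piece j) :
    M.proj i x = if j = i then x else 0 := by
  split_ifs with h
  · subst h
    rw [proj_apply, M.grading.isInternal.ofBijective_coeLinearMap_of_mem hx]
  · rw [proj_apply, M.grading.isInternal.ofBijective_coeLinearMap_of_mem_ne h hx]
    rfl

lemma proj_smul {n : ℕ} {a : A} (ha : a ∈ ga.piece n) (i : ℤ) (x : M.carrier) :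
    M.proj (n + i) (a • x) = a • M.proj i x := by
  induction x using M.grading.isInternal.induction_on with
  | zero => simp
  | add y z hy hz => simp only [smul_add, map_add, hy, hz]
  | mem j y hy =>
    rw [M.proj_of_mem (M.grading.smul_mem ha hy), M.proj_of_mem hy]
    split_ifs <;> first | omega | simp

lemma proj_map {N : GrMod k ga} {g : M.carrier →ₗ[A] N.carrier}
    (hg : IsGradedMap k M.grading N.grading g) (i : ℤ) (x : M.carrier) :
    N.proj i (g x) = g (M.proj i x) := by
  induction x using M.grading.isInternal.induction_on with
  | zero => simp
  | add y z hy hz => simp only [map_add, hy, hz]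
  | mem j y hy =>
    rw [N.proj_of_mem (hg j y hy), M.proj_of_mem hy]
    split_ifs <;> simp

def degrees (M : GrMod k ga) : Finset ℤ :=
  (Submodule.finite_ne_bot_of_iSupIndep M.grading.isInternal.submodule_iSupIndep).toFinset

lemma piece_eq_bot_of_notMem_degrees {i : ℤ} (hi : i ∉ M.degrees) :
    M.grading.piece i = ⊥ := by
  simpa [degrees] using hi

variable {Q N : GrMod k ga} {M}

def gradedPartLinear (l : Q.carrier →ₗ[A] M.carrier) : Q.carrier →ₗ[k] M.carrier :=
  ∑ i ∈ Q.degrees, M.proj i ∘ₗ l.restrictScalars k ∘ₗ Q.proj i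

lemma gradedPartLinear_apply_of_mem (l : Q.carrier →ₗ[A] M.carrier) {t : ℤ} {x : Q.carrier}
    (hx : x ∈ Q.grading.piece t) : gradedPartLinear l x = M.proj t (l x) := by
  by_cases ht : t ∈ Q.degrees
  · simp [gradedPartLinear, Q.proj_of_mem hx, apply_ite, ht]
  · rw [Q.piece_eq_bot_of_notMem_degrees ht, Submodule.mem_bot] at hx
    simp [hx]

lemma gradedPartLinear_smul (l : Q.carrier →ₗ[A] M.carrier) (a : A) (x : Q.carrier) :
    gradedPartLinear l (a • x) = a • gradedPartLinear l x := by
  induction a using ga.isInternal.induction_on with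
  | zero => simp
  | add a b ha hb => simp only [add_smul, map_add, ha, hb]
  | mem n a ha =>
    induction x using Q.grading.isInternal.induction_on with
    | zero => simp
    | add x y hx hy => simp only [smul_add, map_add, hx, hy]
    | mem t x hx =>
      rw [gradedPartLinear_apply_of_mem l (Q.grading.smul_mem ha hx),
        gradedPartLinear_apply_of_mem l hx, map_smul, M.proj_smul ha]

def gradedPart (l : Q.carrier →ₗ[A] M.carrier) : Q.carrier →ₗ[A] M.carrier :=
  { gradedPartLinear l with map_smul' := gradedPartLinear_smul l }

lemma gradedPart_apply_of_mem (l : Q.carrier →ₗ[A] M.carrier) {t : ℤ} {x : Q.carrier}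
    (hx : x ∈ Q.grading.piece t) : gradedPart l x = M.proj t (l x) :=
  gradedPartLinear_apply_of_mem l hx

lemma isGradedMap_gradedPart (l : Q.carrier →ₗ[A] M.carrier) :
    IsGradedMap k Q.grading M.grading (gradedPart l) := fun t x hx => by
  rw [gradedPart_apply_of_mem l hx]
  exact M.proj_mem t _

lemma gradedPart_eq_self {l : Q.carrier →ₗ[A] M.carrier}
    (hl : IsGradedMap k Q.grading M.grading l) : gradedPart l = l := by
  ext x
  induction x using Q.grading.isInternal.induction_on with
  | zero => simp
  | add x y hx hy => simp only [map_add, hx, hy]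
  | mem t x hx => rw [gradedPart_apply_of_mem l hx, M.proj_of_mem (hl t x hx), if_pos rfl]

lemma comp_gradedPart {g : M.carrier →ₗ[A] N.carrier} (hg : IsGradedMap k M.grading N.grading g)
    (l : Q.carrier →ₗ[A] M.carrier) : g ∘ₗ gradedPart l = gradedPart (g ∘ₗ l) := by
  ext x
  induction x using Q.grading.isInternal.induction_on with
  | zero => simp
  | add x y hx hy => simp only [map_add, hx, hy]
  | mem t x hx =>
    rw [LinearMap.comp_apply, gradedPart_apply_of_mem _ hx, gradedPart_apply_of_mem _ hx,
      LinearMap.comp_apply, M.proj_map hg]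

end GrMod

theorem IsGrProjective.of_projective {k : Type} [Field k] {A : Type} [Ring A] [Algebra k A]
    {ga : PosGrading k A} (Q : GrMod k ga) [Module.Projective A Q.carrier] :
    IsGrProjective k Q := by
  intro M N g hg hg_surj h hh
  obtain ⟨l, rfl⟩ := Module.projective_lifting_property g h hg_surj
  exact ⟨GrMod.gradedPart l, GrMod.isGradedMap_gradedPart l,
    by rw [GrMod.comp_gradedPart hg, GrMod.gradedPart_eq_self hh]⟩

end

namespace DirectSum.IsInternal

variable {R ι κ M : Type*} [Ring R] [AddCommGroup M] [Module R M]

lemma iSup_fiber_apply {p : ι → Submodule R M} {e : ι → κ} (he : Function.Injective e)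
    (i : ι) : ⨆ (i') (_ : e i' = e i), p i' = p i := by
  simp [he.eq_iff]

theorem iSup_fiber [DecidableEq ι] [DecidableEq κ] {p : ι → Submodule R M} (h : IsInternal p)
    {e : ι → κ} (he : Function.Injective e) :
    IsInternal fun j => ⨆ (i) (_ : e i = j), p i := by
  rw [isInternal_submodule_iff_iSupIndep_and_iSup_eq_top]
  refine ⟨fun j => ?_, ?_⟩
  · by_cases hj : ∃ i, e i = j
    · obtain ⟨i, rfl⟩ := hj
      dsimp only
      rw [iSup_fiber_apply he]
      refine (h.submodule_iSupIndep i).mono_right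
        (iSup₂_le fun j hj => iSup₂_le fun i' hi' => ?_)
      exact le_iSup₂ (f := fun i' (_ : i' ≠ i) => p i') i' (by rintro rfl; exact hj hi'.symm)
    · push Not at hj
      simp [hj]
  · rw [iSup_comm]
    simpa using h.submodule_iSup_eq_top

theorem pi [DecidableEq κ] {ι' : Type*} [Finite ι'] [DecidableEq ι'] {M : ι' → Type*}
    [∀ i, AddCommGroup (M i)] [∀ i, Module R (M i)] {p : ∀ i, κ → Submodule R (M i)}
    (h : ∀ i, IsInternal (p i)) : IsInternal fun t => Submodule.pi Set.univ fun i => p i t := by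
  rw [isInternal_submodule_iff_iSupIndep_and_iSup_eq_top]
  refine ⟨fun t => Submodule.disjoint_def.2 fun f hf hf' => funext fun i => ?_, ?_⟩
  · have hle : (⨆ (t') (_ : t' ≠ t), Submodule.pi Set.univ fun i => p i t') ≤
        (⨆ (t') (_ : t' ≠ t), p i t').comap (LinearMap.proj i) :=
      iSup₂_le fun t' ht' g hg =>
        le_iSup₂ (f := fun t' (_ : t' ≠ t) => p i t') t' ht' (hg i trivial)
    exact Submodule.disjoint_def.1 ((h i).submodule_iSupIndep t) _ (hf i trivial) (hle hf')
  · refine eq_top_iff.2 ?_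
    calc ⊤ = Submodule.pi Set.univ fun i => ⨆ t, p i t := by simp [(h _).submodule_iSup_eq_top]
      _ = ⨆ i, (⨆ t, p i t).map (LinearMap.single R M i) := Submodule.iSup_map_single.symm
      _ ≤ _ := iSup_le fun i => by
        rw [Submodule.map_iSup]
        exact iSup_mono fun t => Submodule.map_le_iff_le_comap.2
          (Submodule.le_comap_single_pi fun i => p i t)

end DirectSum.IsInternal

noncomputable section

namespace PosGrading

variable {k : Type} [Field k] {B : Type} [Ring B] [Algebra k B] (gb : PosGrading k B)

/-- The grading of the shifted algebra `B(-c)`, in which `B_n` sits in degree `n + c`. -/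
def shiftPiece (c t : ℤ) : Submodule k B :=
  ⨆ (n : ℕ) (_ : (n : ℤ) + c = t), gb.piece n

lemma isInternal_shiftPiece (c : ℤ) : DirectSum.IsInternal (gb.shiftPiece c) :=
  gb.isInternal.iSup_fiber fun m n h => by simpa using h

variable {gb}

lemma mul_mem_shiftPiece {i : ℕ} {c j : ℤ} {a b : B} (ha : a ∈ gb.piece i)
    (hb : b ∈ gb.shiftPiece c j) : a * b ∈ gb.shiftPiece c (i + j) := by
  refine (iSup₂_le fun n hn => ?_ : gb.shiftPiece c j ≤
    (gb.shiftPiece c (i + j)).comap (LinearMap.mulLeft k a)) hb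
  exact fun b' hb' => le_iSup₂ (f := fun (n' : ℕ) (_ : (n' : ℤ) + c = i + j) => gb.piece n')
    (i + n) (by push_cast; omega) (gb.mul_mem ha hb')

lemma smul_mem_of_mem_shiftPiece {M : GrMod k gb} {c t : ℤ} {b : B} {v : M.carrier}
    (hb : b ∈ gb.shiftPiece c t) (hv : v ∈ M.grading.piece c) :
    b • v ∈ M.grading.piece t := by
  refine (iSup₂_le fun n hn => ?_ : gb.shiftPiece c t ≤
    (M.grading.piece t).comap ((LinearMap.toSpanSingleton B M.carrier v).restrictScalars k)) hb
  exact fun b' hb' => hn ▸ M.grading.smul_mem hb' hv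

end PosGrading

/-- The graded free module `⨁ₓ B(-d x)` on generators of degrees `d x`. -/
abbrev GrMod.shiftedFree {k : Type} [Field k] {B : Type} [Ring B] [Algebra k B]
    [FiniteDimensional k B] (gb : PosGrading k B) {ι : Type} [Finite ι] (d : ι → ℤ) :
    GrMod k gb where
  carrier := ι → B
  fin := inferInstance
  grading :=
    { piece := fun t => Submodule.pi Set.univ fun x => gb.shiftPiece (d x) t
      isInternal := by
        classical
        exact DirectSum.IsInternal.pi fun x => gb.isInternal_shiftPiece (d x)
      smul_mem := fun ha hf x _ => PosGrading.mul_mem_shiftPiece ha (hf x trivial) }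

section FreeCover

variable {k : Type} [Field k] {B : Type} [Ring B] [Algebra k B] [FiniteDimensional k B]
  {gb : PosGrading k B}

lemma isGradedMap_linearCombination {R : GrMod k gb} {ι : Type} [Fintype ι] {d : ι → ℤ}
    {e : ι → R.carrier} (he : ∀ x, e x ∈ R.grading.piece (d x)) :
    IsGradedMap k (GrMod.shiftedFree gb d).grading R.grading (Fintype.linearCombination B e) :=
  fun _ _ hf => Submodule.sum_mem _ fun x _ =>
    PosGrading.smul_mem_of_mem_shiftPiece (hf x trivial) (he x)

theorem IsGrProjective.projective {R : GrMod k gb} (hR : IsGrProjective k R) :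
    Module.Projective B R.carrier := by
  classical
  let e := R.grading.isInternal.collectedBasis fun i => Module.finBasis k (R.grading.piece i)
  have := Module.Finite.finite_basis e
  have := Fintype.ofFinite (Σ i : ℤ, Fin (Module.finrank k (R.grading.piece i)))
  have he_span : Submodule.span B (Set.range e) = ⊤ :=
    eq_top_iff.2 fun v _ => Submodule.span_le_restrictScalars k B _ (e.mem_span v)
  obtain ⟨l, -, hl⟩ := hR (GrMod.shiftedFree gb fun x => x.1) R (Fintype.linearCombination B e)
    (isGradedMap_linearCombination (R.grading.isInternal.collectedBasis_mem _))
    ((span_range_eq_top_iff_surjective_fintypeLinearCombination B e).1 he_span) LinearMap.id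
    fun _ _ h => h
  exact Module.Projective.of_split l _ hl

end FreeCover

end

theorem Submodule.eq_top_of_sup_jacobson_eq_top {R M : Type*} [Ring R] [AddCommGroup M]
    [Module R M] [Module.Finite R M] {N : Submodule R M} (h : N ⊔ Module.jacobson R M = ⊤) :
    N = ⊤ := by
  by_contra hN
  obtain ⟨m, hm, hNm⟩ := (eq_top_or_exists_le_coatom N).resolve_left hN
  exact hm.1 (eq_top_iff.2 (h ▸ sup_le hNm (sInf_le hm)))

theorem LinearMap.surjective_of_surjective_comp_of_ker_le_jacobson {R M N P : Type*} [Ring R]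
    [AddCommGroup M] [Module R M] [Module.Finite R M] [AddCommGroup N] [Module R N]
    [AddCommGroup P] [Module R P] {ρ : M →ₗ[R] N} {τ : P →ₗ[R] M}
    (hker : LinearMap.ker ρ ≤ Module.jacobson R M) (h : Function.Surjective (ρ ∘ₗ τ)) :
    Function.Surjective τ := by
  rw [← LinearMap.range_eq_top]
  refine Submodule.eq_top_of_sup_jacobson_eq_top (eq_top_iff.2 fun y _ => ?_)
  obtain ⟨p, hp⟩ := h (ρ y)
  have hy : y - τ p ∈ LinearMap.ker ρ := by
    rw [LinearMap.mem_ker, map_sub, ← LinearMap.comp_apply, hp, sub_self]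
  exact Submodule.mem_sup.2 ⟨τ p, ⟨p, rfl⟩, y - τ p, hker hy, add_sub_cancel _ _⟩

theorem SmallKernel.ker_le_jacobson {k : Type} [Field k] {A : Type} [Ring A] [Algebra k A]
    {ga : PosGrading k A} {R N : GrMod k ga} {ρ : R.carrier →ₗ[A] N.carrier}
    (h : SmallKernel k ρ) : LinearMap.ker ρ ≤ Module.jacobson A R.carrier := by
  refine fun x hx => (Submodule.span_le.2 ?_) (h x hx)
  rintro _ ⟨r, hr, v, rfl⟩
  rw [Ideal.jacobson_bot] at hr
  exact Module.le_comap_jacobson (LinearMap.toSpanSingleton A _ v) hr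

theorem Module.Projective.of_split_compHom {A B P M : Type*} [Ring A] [Ring B] [AddCommGroup P]
    [Module B P] [AddCommGroup M] [Module B M] (φ : A →+* B) (i : M →ₗ[B] P)
    (s : P →ₗ[B] M) (H : s ∘ₗ i = LinearMap.id)
    (hP : @Module.Projective A _ P _ (Module.compHom P φ)) :
    @Module.Projective A _ M _ (Module.compHom M φ) := by
  let := Module.compHom P φ
  let := Module.compHom M φ
  let iA : M →ₗ[A] P := { i.toAddMonoidHom with map_smul' := fun a => i.map_smul (φ a) }
  let sA : P →ₗ[A] M := { s.toAddMonoidHom with map_smul' := fun a => s.map_smul (φ a) }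
  exact .of_split iA sA (LinearMap.ext fun x => LinearMap.congr_fun H x)

noncomputable section

variable (k A B : Type) [Field k] [Ring A] [Algebra k A] [FiniteDimensional k A]
  [Ring B] [Algebra k B] [FiniteDimensional k B]
  (ga : PosGrading k A) (gb : PosGrading k B)

variable (φ : A →ₐ[k] B) (hφ : IsGradedAlgHom k ga gb φ)

theorem stmt5
    (N' : GrMod k gb) (m : ℤ)
    (hsemi : IsSemilinearOfDegree k (GrMod.res k φ hφ N') m)
    (P : Type) [AddCommGroup P] [Module B P]
    (hPB : Module.Projective B P)
    (hPA : @Module.Projective A _ P _ (Module.compHom P φ.toRingHom))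
    (σ : P →ₗ[B] N'.carrier) (hσ : Function.Surjective σ)
    (R : GrMod k gb) (ρ : R.carrier →ₗ[B] N'.carrier)
    (hcover : IsGrProjCover k R N' ρ) :
    IsGrProjective k (GrMod.res k φ hφ R) := by
  obtain ⟨-, hρ_surj, hR, hρ_small⟩ := hcover
  have hR_proj : Module.Projective B R.carrier := hR.projective
  have hR_fin : Module.Finite B R.carrier := Module.Finite.of_restrictScalars_finite k B R.carrier
  obtain ⟨τ, hτ⟩ := Module.projective_lifting_property ρ σ hρ_surj
  have hτ_surj : Function.Surjective τ :=
    LinearMap.surjective_of_surjective_comp_of_ker_le_jacobson hρ_small.ker_le_jacobson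
      (hτ ▸ hσ)
  obtain ⟨ι, hι⟩ := Module.projective_lifting_property τ LinearMap.id hτ_surj
  have hRA : Module.Projective A (GrMod.res k φ hφ R).carrier :=
    Module.Projective.of_split_compHom φ.toRingHom ι τ hι hPA
  exact IsGrProjective.of_projective (GrMod.res k φ hφ R)

end
end
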